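/- Let A be a strictly positive operator on H and X, T, Y ∈ B_A(H). Then for all x ∈ H: |⟨X^{♯A}TYx, x⟩_A| + |⟨Y^{♯A}TXx, x⟩_A| ≤ 2·w_A(T)·‖Xx‖_A·‖Yx‖_A. -/

import Mathlib

noncomputable section
open Complex ContinuousLinearMap

variable {H : Type*} [NormedAddCommGroup H] [InnerProductSpace ℂ H] [CompleteSpace H]

/-- The `A`-inner product `⟨x,y⟩_A = ⟨Ax,y⟩`. -/
def innA (A : H →L[ℂ] H) (x y : H) : ℂ := inner ℂ (A x) y

/-- The `A`-seminorm of a vector, `‖x‖_A = √⟨x,x⟩_A`. -/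
def vnormA (A : H →L[ℂ] H) (x : H) : ℝ := Real.sqrt (innA A x x).re

/-- The `A`-numerical radius `w_A(T) = sup{|⟨Tx,x⟩_A| : ‖x‖_A = 1}`. -/
def wA (A T : H →L[ℂ] H) : ℝ :=
  sSup {r : ℝ | ∃ x : H, vnormA A x = 1 ∧ r = ‖innA A (T x) x‖}

/-- The `A`-operator seminorm, `sup` over `A`-unit vectors in the closure of the range of `A`. -/
def opNormA (A T : H →L[ℂ] H) : ℝ :=
  sSup {r : ℝ | ∃ x : H, x ∈ closure (Set.range A) ∧ vnormA A x = 1 ∧ r = vnormA A (T x)}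

/-- The `A`-operator seminorm, `sup` over all `A`-unit vectors (used when `A > 0`). -/
def opNormA' (A T : H →L[ℂ] H) : ℝ :=
  sSup {r : ℝ | ∃ x : H, vnormA A x = 1 ∧ r = vnormA A (T x)}

/-- The `A`-Crawford number `c_A(T) = inf{|⟨Tx,x⟩_A| : ‖x‖_A = 1}`. -/
def cA (A T : H →L[ℂ] H) : ℝ :=
  sInf {r : ℝ | ∃ x : H, vnormA A x = 1 ∧ r = ‖innA A (T x) x‖}

/-- The `A`-minimum modulus `m_A(T) = inf{‖Tx‖_A : ‖x‖_A = 1}` (version for `A > 0`). -/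
def mA (A T : H →L[ℂ] H) : ℝ :=
  sInf {r : ℝ | ∃ x : H, vnormA A x = 1 ∧ r = vnormA A (T x)}

/-- `S` is an `A`-adjoint of `T`, i.e. `A S = T* A`. -/
def IsAAdjoint (A T S : H →L[ℂ] H) : Prop :=
  A.comp S = (ContinuousLinearMap.adjoint T).comp A

/-- `A` is strictly positive: positive and `⟨Ax,x⟩ > 0` for all `x ≠ 0`. -/
def StrictPos (A : H →L[ℂ] H) : Prop :=
  A.IsPositive ∧ ∀ x : H, x ≠ 0 → 0 < (innA A x x).re

/-- The inner product on `H ⊕ H`. -/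
def inn2 (u v : H × H) : ℂ := inner ℂ u.1 v.1 + inner ℂ u.2 v.2

/-- `B = diag(A, A)` acting on `H ⊕ H`. -/
def Bop (A : H →L[ℂ] H) : H × H →L[ℂ] H × H := A.prodMap A

/-- The `B`-seminorm on `H ⊕ H`. -/
def vnormB (A : H →L[ℂ] H) (u : H × H) : ℝ := Real.sqrt (inn2 (Bop A u) u).re

/-- The `B`-numerical radius on `H ⊕ H`, where `B = diag(A, A)`. -/
def wB (A : H →L[ℂ] H) (S : H × H →L[ℂ] H × H) : ℝ :=
  sSup {r : ℝ | ∃ u : H × H, vnormB A u = 1 ∧ r = ‖inn2 (Bop A (S u)) u‖}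

/-- The `2 × 2` operator matrix `[[X, Y], [Z, W]]` acting on `H ⊕ H`. -/
def blk (X Y Z W : H →L[ℂ] H) : H × H →L[ℂ] H × H :=
  ((X.comp (ContinuousLinearMap.fst ℂ H H)) + (Y.comp (ContinuousLinearMap.snd ℂ H H))).prod
    ((Z.comp (ContinuousLinearMap.fst ℂ H H)) + (W.comp (ContinuousLinearMap.snd ℂ H H)))

/-!
Since `⟨X^{♯A} z, x⟩_A = ⟨z, X x⟩_A`, the claim reads
`|⟨T u, v⟩_A| + |⟨T v, u⟩_A| ≤ 2 w_A(T) ‖u‖_A ‖v‖_A` with `u = Y x`, `v = X x`.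
Replace `u` by `p = c u`, with `|c| = 1` chosen so that both terms get the same phase. Then the
polarization identity `⟨T(p+v), p+v⟩_A - ⟨T(p-v), p-v⟩_A = 2 (⟨T p, v⟩_A + ⟨T v, p⟩_A)` and the
parallelogram law bound the left side by `w_A(T) (‖u‖_A² + ‖v‖_A²)`. Rescaling `u` and `v` so that
their `A`-seminorms are equal gives the claim.

Because `w_A(T)` is an `sSup` of reals, all of this needs the `A`-numerical range of `T` to be
bounded. If `S` is an `A`-adjoint of `T`, then `R = S T` is `A`-selfadjoint and
`‖T x‖_A² ≤ ‖x‖_A ‖R x‖_A`. For `‖x‖_A = 1`, iterating `‖R x‖_A² ≤ ‖R² x‖_A` gives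
`‖R x‖_A ^ 2ⁿ ≤ ‖R ^ 2ⁿ x‖_A ≤ ‖R‖ ^ 2ⁿ ‖√A‖ ‖x‖`, hence `‖R x‖_A ≤ ‖R‖`.
-/

open scoped InnerProductSpace ComplexConjugate
open Filter Topology

lemma le_of_forall_pow_two_pow_le_mul {a b C : ℝ} (hb : 0 ≤ b)
    (h : ∀ n : ℕ, a ^ 2 ^ n ≤ b ^ 2 ^ n * C) : a ≤ b := by
  by_contra! hab
  have ha : 0 < a := hb.trans_lt hab
  have hlim : Tendsto (fun n : ℕ => (b / a) ^ 2 ^ n * C) atTop (𝓝 0) := by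
    have hr := (tendsto_pow_atTop_nhds_zero_of_lt_one (div_nonneg hb ha.le)
      ((div_lt_one ha).2 hab)).comp (tendsto_pow_atTop_atTop_of_one_lt one_lt_two)
    simpa using hr.mul_const C
  obtain ⟨n, hn⟩ := (hlim.eventually (gt_mem_nhds one_pos)).exists
  rw [div_pow, div_mul_eq_mul_div, div_lt_one (by positivity)] at hn
  linarith [h n]

lemma Complex.exists_norm_eq_one_norm_add_norm (a b : ℂ) :
    ∃ c : ℂ, ‖c‖ = 1 ∧ ‖a‖ + ‖b‖ = ‖conj c * a + c * b‖ := by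
  have ha := norm_mul_exp_arg_mul_I a
  have hb := norm_mul_exp_arg_mul_I b
  generalize arg a = θ at ha
  generalize arg b = φ at hb
  -- `c` rotates `a = ‖a‖ e^{iθ}` and `b = ‖b‖ e^{iφ}` to the common phase `e^{i(θ+φ)/2}`.
  refine ⟨exp (↑((θ - φ) / 2) * I), norm_exp_ofReal_mul_I _, ?_⟩
  have hphase : conj (exp (↑((θ - φ) / 2) * I)) * a + exp (↑((θ - φ) / 2) * I) * b =
      (‖a‖ + ‖b‖ : ℝ) * exp (↑((θ + φ) / 2) * I) := by
    conv_lhs => rw [← ha, ← hb]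
    rw [← exp_conj, mul_left_comm, ← exp_add, mul_left_comm _ (‖b‖ : ℂ), ← exp_add, map_mul,
      conj_ofReal, conj_I]
    push_cast
    ring_nf
  rw [hphase, norm_mul, norm_exp_ofReal_mul_I, mul_one, norm_real,
    Real.norm_of_nonneg (by positivity)]

section

variable {E : Type*} [NormedAddCommGroup E] [InnerProductSpace ℂ E] {A : E →L[ℂ] E}

lemma sq_vnormA (hA : A.IsPositive) (x : E) : vnormA A x ^ 2 = (innA A x x).re :=
  Real.sq_sqrt (hA.re_inner_nonneg_left x)

lemma norm_innA_smul_smul (a b : ℂ) (x y : E) :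
    ‖innA A (a • x) (b • y)‖ = ‖a‖ * ‖b‖ * ‖innA A x y‖ := by
  simp only [innA, map_smul, inner_smul_left, inner_smul_right, norm_mul, norm_conj]
  ring

end

section

variable {A T S : H →L[ℂ] H}

lemma innA_eq_inner_sqrt (hA : A.IsPositive) (x y : H) :
    innA A x y = ⟪CFC.sqrt A x, CFC.sqrt A y⟫_ℂ := by
  have hQ : IsSelfAdjoint (CFC.sqrt A) := (CFC.sqrt_nonneg A).isSelfAdjoint
  conv_lhs => rw [innA, ← CFC.sqrt_mul_sqrt_self A ((nonneg_iff_isPositive A).2 hA)]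
  rw [mul_apply_eq_comp, ← adjoint_inner_left, ← star_eq_adjoint, hQ.star_eq]

lemma vnormA_eq_norm_sqrt (hA : A.IsPositive) (x : H) : vnormA A x = ‖CFC.sqrt A x‖ := by
  rw [vnormA, innA_eq_inner_sqrt hA, ← Real.sqrt_sq (norm_nonneg (CFC.sqrt A x))]
  congr 1
  exact inner_self_eq_norm_sq (𝕜 := ℂ) _

lemma norm_innA_le (hA : A.IsPositive) (x y : H) : ‖innA A x y‖ ≤ vnormA A x * vnormA A y := by
  rw [innA_eq_inner_sqrt hA, vnormA_eq_norm_sqrt hA, vnormA_eq_norm_sqrt hA]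
  exact norm_inner_le_norm _ _

lemma vnormA_smul (hA : A.IsPositive) (c : ℂ) (x : H) : vnormA A (c • x) = ‖c‖ * vnormA A x := by
  rw [vnormA_eq_norm_sqrt hA, vnormA_eq_norm_sqrt hA, map_smul, norm_smul]

lemma isAAdjoint_iff_mul : IsAAdjoint A T S ↔ A * S = star T * A := by
  rw [star_eq_adjoint]; rfl

lemma IsAAdjoint.mul {T' S' : H →L[ℂ] H} (hT : IsAAdjoint A T S) (hT' : IsAAdjoint A T' S') :
    IsAAdjoint A (T * T') (S' * S) := by
  rw [isAAdjoint_iff_mul] at *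
  rw [star_mul, ← mul_assoc, hT', mul_assoc, hT, mul_assoc]

lemma IsAAdjoint.symm (hA : IsSelfAdjoint A) (h : IsAAdjoint A T S) : IsAAdjoint A S T := by
  rw [isAAdjoint_iff_mul] at *
  simpa [star_mul, hA.star_eq] using (congrArg star h).symm

lemma IsAAdjoint.pow {R : H →L[ℂ] H} (hR : IsAAdjoint A R R) (n : ℕ) :
    IsAAdjoint A (R ^ n) (R ^ n) := by
  induction n with
  | zero => simp [isAAdjoint_iff_mul]
  | succ n ih => simpa only [← pow_succ, ← pow_succ'] using ih.mul hR

lemma IsAAdjoint.innA_apply_left (h : IsAAdjoint A T S) (u v : H) :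
    innA A (S u) v = innA A u (T v) := by
  rw [innA, innA, ← comp_apply, h, comp_apply, adjoint_inner_left]

lemma IsAAdjoint.sq_vnormA_apply_le (hA : A.IsPositive) (h : IsAAdjoint A T S) (x : H) :
    vnormA A (T x) ^ 2 ≤ vnormA A x * vnormA A (S (T x)) :=
  calc vnormA A (T x) ^ 2 = (innA A (T x) (T x)).re := sq_vnormA hA _
    _ = (innA A x (S (T x))).re := by rw [(h.symm hA.isSelfAdjoint).innA_apply_left]
    _ ≤ ‖innA A x (S (T x))‖ := re_le_norm _
    _ ≤ vnormA A x * vnormA A (S (T x)) := norm_innA_le hA _ _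

lemma IsAAdjoint.vnormA_apply_le_norm (hA : A.IsPositive) {R : H →L[ℂ] H}
    (hR : IsAAdjoint A R R) {x : H} (hx : vnormA A x = 1) : vnormA A (R x) ≤ ‖R‖ := by
  have hiter (n : ℕ) : vnormA A (R x) ^ 2 ^ n ≤ vnormA A ((R ^ 2 ^ n) x) := by
    induction n with
    | zero => simp
    | succ n ih =>
      calc vnormA A (R x) ^ 2 ^ (n + 1) = (vnormA A (R x) ^ 2 ^ n) ^ 2 := by
            rw [pow_succ, pow_mul]
        _ ≤ vnormA A ((R ^ 2 ^ n) x) ^ 2 := by gcongr; exact pow_nonneg (Real.sqrt_nonneg _) _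
        _ ≤ vnormA A x * vnormA A ((R ^ 2 ^ n) ((R ^ 2 ^ n) x)) :=
            (hR.pow _).sq_vnormA_apply_le hA x
        _ = vnormA A ((R ^ 2 ^ (n + 1)) x) := by
            rw [hx, one_mul, pow_succ, pow_mul, sq, mul_apply_eq_comp]
  have hgrowth (n : ℕ) : vnormA A ((R ^ 2 ^ n) x) ≤ ‖R‖ ^ 2 ^ n * (‖CFC.sqrt A‖ * ‖x‖) :=
    calc vnormA A ((R ^ 2 ^ n) x) = ‖CFC.sqrt A ((R ^ 2 ^ n) x)‖ := vnormA_eq_norm_sqrt hA _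
      _ ≤ ‖CFC.sqrt A‖ * (‖R ^ 2 ^ n‖ * ‖x‖) :=
          (le_opNorm _ _).trans (by gcongr; exact le_opNorm _ _)
      _ ≤ ‖CFC.sqrt A‖ * (‖R‖ ^ 2 ^ n * ‖x‖) := by gcongr; exact norm_pow_le' _ (by positivity)
      _ = ‖R‖ ^ 2 ^ n * (‖CFC.sqrt A‖ * ‖x‖) := by ring
  exact le_of_forall_pow_two_pow_le_mul (norm_nonneg R) fun n => (hiter n).trans (hgrowth n)

lemma IsAAdjoint.vnormA_apply_le_sqrt_norm_mul (hA : A.IsPositive) (h : IsAAdjoint A T S) {x : H}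
    (hx : vnormA A x = 1) : vnormA A (T x) ≤ √‖S * T‖ := by
  have hST : IsAAdjoint A (S * T) (S * T) := (h.symm hA.isSelfAdjoint).mul h
  refine Real.le_sqrt_of_sq_le ?_
  calc vnormA A (T x) ^ 2 ≤ vnormA A x * vnormA A (S (T x)) := h.sq_vnormA_apply_le hA x
    _ ≤ ‖S * T‖ := by rw [hx, one_mul]; exact hST.vnormA_apply_le_norm hA hx

lemma IsAAdjoint.bddAbove_norm_innA (hA : A.IsPositive) (h : IsAAdjoint A T S) :
    BddAbove {r : ℝ | ∃ x : H, vnormA A x = 1 ∧ r = ‖innA A (T x) x‖} := by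
  refine ⟨√‖S * T‖, ?_⟩
  rintro _ ⟨x, hx, rfl⟩
  calc ‖innA A (T x) x‖ ≤ vnormA A (T x) * vnormA A x := norm_innA_le hA _ _
    _ ≤ √‖S * T‖ := by rw [hx, mul_one]; exact h.vnormA_apply_le_sqrt_norm_mul hA hx

lemma norm_innA_apply_self_le (hA : A.IsPositive) (h : IsAAdjoint A T S) (x : H) :
    ‖innA A (T x) x‖ ≤ wA A T * vnormA A x ^ 2 := by
  rcases (show 0 ≤ vnormA A x from Real.sqrt_nonneg _).eq_or_lt with hx | hx
  · calc ‖innA A (T x) x‖ ≤ vnormA A (T x) * vnormA A x := norm_innA_le hA _ _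
      _ = wA A T * vnormA A x ^ 2 := by rw [← hx]; ring
  set c : ℝ := (vnormA A x)⁻¹
  have hc : 0 < c := inv_pos.2 hx
  have hc_mul : c * vnormA A x = 1 := inv_mul_cancel₀ hx.ne'
  have hcx : vnormA A ((c : ℂ) • x) = 1 := by
    rw [vnormA_smul hA, norm_real, Real.norm_of_nonneg hc.le, hc_mul]
  have hle : ‖innA A (T ((c : ℂ) • x)) ((c : ℂ) • x)‖ ≤ wA A T :=
    le_csSup (h.bddAbove_norm_innA hA) ⟨_, hcx, rfl⟩
  rw [map_smul, norm_innA_smul_smul, norm_real, Real.norm_of_nonneg hc.le] at hle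
  calc ‖innA A (T x) x‖ = (c * vnormA A x) ^ 2 * ‖innA A (T x) x‖ := by rw [hc_mul]; ring
    _ = c * c * ‖innA A (T x) x‖ * vnormA A x ^ 2 := by ring
    _ ≤ wA A T * vnormA A x ^ 2 := by gcongr

lemma norm_innA_add_norm_innA_le (hA : A.IsPositive) (h : IsAAdjoint A T S) (u v : H) :
    ‖innA A (T u) v‖ + ‖innA A (T v) u‖ ≤ wA A T * (vnormA A u ^ 2 + vnormA A v ^ 2) := by
  obtain ⟨c, hc, hsum⟩ := exists_norm_eq_one_norm_add_norm (innA A (T u) v) (innA A (T v) u)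
  set p := c • u
  have hpol : 2 * (conj c * innA A (T u) v + c * innA A (T v) u) =
      innA A (T (p + v)) (p + v) - innA A (T (p - v)) (p - v) := by
    simp only [p, innA, map_add, map_sub, map_smul, inner_add_left, inner_add_right,
      inner_sub_left, inner_sub_right, inner_smul_left, inner_smul_right]
    ring
  have hpar : vnormA A (p + v) ^ 2 + vnormA A (p - v) ^ 2 =
      2 * (vnormA A u ^ 2 + vnormA A v ^ 2) := by
    have hp : vnormA A p = vnormA A u := by rw [vnormA_smul hA, hc, one_mul]
    rw [← hp]
    simp only [vnormA_eq_norm_sqrt hA, map_add, map_sub]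
    exact parallelogram_law_with_norm ℂ (CFC.sqrt A p) (CFC.sqrt A v)
  calc ‖innA A (T u) v‖ + ‖innA A (T v) u‖
      = ‖innA A (T (p + v)) (p + v) - innA A (T (p - v)) (p - v)‖ / 2 := by
        rw [hsum, ← hpol, norm_mul]; norm_num
    _ ≤ (‖innA A (T (p + v)) (p + v)‖ + ‖innA A (T (p - v)) (p - v)‖) / 2 := by
        gcongr; exact norm_sub_le _ _
    _ ≤ (wA A T * vnormA A (p + v) ^ 2 + wA A T * vnormA A (p - v) ^ 2) / 2 := by
        gcongr <;> exact norm_innA_apply_self_le hA h _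
    _ = wA A T * (vnormA A u ^ 2 + vnormA A v ^ 2) := by rw [← mul_add, hpar]; ring

lemma norm_innA_add_norm_innA_le_two_mul (hA : StrictPos A) (h : IsAAdjoint A T S) (u v : H) :
    ‖innA A (T u) v‖ + ‖innA A (T v) u‖ ≤ 2 * wA A T * vnormA A u * vnormA A v := by
  rcases eq_or_ne u 0 with rfl | hu
  · simp [innA, vnormA]
  rcases eq_or_ne v 0 with rfl | hv
  · simp [innA, vnormA]
  have ha : 0 < vnormA A u := Real.sqrt_pos.2 (hA.2 u hu)
  have hb : 0 < vnormA A v := Real.sqrt_pos.2 (hA.2 v hv)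
  -- Rescaling `u` by `‖v‖_A` and `v` by `‖u‖_A` makes both seminorms `‖u‖_A ‖v‖_A`.
  have hscaled := norm_innA_add_norm_innA_le hA.1 h ((vnormA A v : ℂ) • u) ((vnormA A u : ℂ) • v)
  simp only [map_smul, norm_innA_smul_smul, vnormA_smul hA.1, norm_real,
    Real.norm_of_nonneg ha.le, Real.norm_of_nonneg hb.le] at hscaled
  refine le_of_mul_le_mul_left ?_ (mul_pos ha hb)
  linear_combination hscaled

end

theorem stmt18 (A X T Y X' Y' : H →L[ℂ] H) (hA : StrictPos A)
    (hX : IsAAdjoint A X X') (hY : IsAAdjoint A Y Y') (hT : ∃ S, IsAAdjoint A T S) :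
    ∀ x : H, ‖innA A ((X' * T * Y) x) x‖ + ‖innA A ((Y' * T * X) x) x‖ ≤
      2 * wA A T * vnormA A (X x) * vnormA A (Y x) := by
  obtain ⟨S, hS⟩ := hT
  intro x
  rw [mul_apply_eq_comp, mul_apply_eq_comp, hX.innA_apply_left, mul_apply_eq_comp,
    mul_apply_eq_comp, hY.innA_apply_left, add_comm]
  exact norm_innA_add_norm_innA_le_two_mul hA hS (X x) (Y x)
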